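/- arXiv:1810.09274 — 5 statements merged into one kernel-verified Lean document; each statement's English description precedes it below -/
import Mathlib

section
/- Let a : Fin R → ℝ^D be a family of vectors (R ≥ 1) and set b_r = -(1/2)‖a_r‖² for each r. Then for every z ∈ ℝ^D and every pair of indices r, r' ∈ Fin R, one has ⟨a_r, z⟩ + b_r ≥ ⟨a_{r'}, z⟩ + b_{r'} if and only if ‖a_r − z‖² ≤ ‖a_{r'} − z‖². Consequently the maximizers of r ↦ ⟨a_r, z⟩ + b_r coincide with the minimizers of r ↦ ‖a_r − z‖², i.e. the max-affine spline vector quantization with these biases is a K-means (nearest-centroid) assignment with centroids a_r. -/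
/-- With biases `b r = -(1/2)‖a r‖²`, the max-affine spline scores compare
exactly oppositely to squared distances to the centroids, hence the MASO VQ (argmax of
affine scores) is the K-means (nearest-centroid) assignment with centroids `a r`. -/
theorem stmt_0 {D R : ℕ} (hR : 1 ≤ R)
    (a : Fin R → EuclideanSpace ℝ (Fin D)) (b : Fin R → ℝ)
    (hb : ∀ r, b r = -(1/2) * ‖a r‖^2) :
    (∀ (z : EuclideanSpace ℝ (Fin D)) (r r' : Fin R),
        (inner ℝ (a r) z : ℝ) + b r ≥ (inner ℝ (a r') z : ℝ) + b r' ↔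
          ‖a r - z‖^2 ≤ ‖a r' - z‖^2) ∧
    (∀ (z : EuclideanSpace ℝ (Fin D)) (r : Fin R),
        (∀ r', (inner ℝ (a r') z : ℝ) + b r' ≤ (inner ℝ (a r) z : ℝ) + b r) ↔
          (∀ r', ‖a r - z‖^2 ≤ ‖a r' - z‖^2)) := by
  have key : ∀ (z : EuclideanSpace ℝ (Fin D)) (r r' : Fin R),
      (inner ℝ (a r) z : ℝ) + b r ≥ (inner ℝ (a r') z : ℝ) + b r' ↔
        ‖a r - z‖^2 ≤ ‖a r' - z‖^2 := by
    intro z r r'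
    rw [hb r, hb r', norm_sub_sq_real (a r) z,
      norm_sub_sq_real (a r') z]
    constructor <;> intro h <;> nlinarith [h]
  exact ⟨key, fun z r => ⟨fun h r' => (key z r r').mp (h r'),
    fun h r' => (key z r r').mpr (h r')⟩⟩
end

section
/- Let a : Fin R → ℝ^D, b : Fin R → ℝ, and define the prior π_r = exp(b_r + (1/2)‖a_r‖²) / ∑_{j ∈ Fin R} exp(b_j + (1/2)‖a_j‖²). Then for every z ∈ ℝ^D and every pair r, r' ∈ Fin R, exp(−‖z − a_r‖²/2) · π_r ≥ exp(−‖z − a_{r'}‖²/2) · π_{r'} if and only if ⟨a_r, z⟩ + b_r ≥ ⟨a_{r'}, z⟩ + b_{r'}. Hence the maximum a posteriori index of the Gaussian mixture with unit-variance isotropic components centered at a_r and prior π is exactly the max-affine-spline hard vector quantization index argmax_r (⟨a_r, z⟩ + b_r). -/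
/-- With prior `π r ∝ exp(b r + ½‖a r‖²)`, comparing unnormalized GMM
posterior weights `exp(−‖z−a r‖²/2)·π r` is equivalent to comparing affine scores
`⟨a r, z⟩ + b r`; hence the MAP index of the GMM is the MASO hard-VQ index. -/
theorem stmt_1 {D R : ℕ}
    (a : Fin R → EuclideanSpace ℝ (Fin D)) (b : Fin R → ℝ) (π : Fin R → ℝ)
    (hπ : ∀ r, π r = Real.exp (b r + (1/2) * ‖a r‖^2) /
        ∑ j, Real.exp (b j + (1/2) * ‖a j‖^2)) :
    (∀ (z : EuclideanSpace ℝ (Fin D)) (r r' : Fin R),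
        Real.exp (-‖z - a r‖^2 / 2) * π r ≥ Real.exp (-‖z - a r'‖^2 / 2) * π r' ↔
          (inner ℝ (a r) z : ℝ) + b r ≥ (inner ℝ (a r') z : ℝ) + b r') ∧
    (∀ (z : EuclideanSpace ℝ (Fin D)) (r : Fin R),
        (∀ r', Real.exp (-‖z - a r'‖^2 / 2) * π r' ≤ Real.exp (-‖z - a r‖^2 / 2) * π r) ↔
          (∀ r', (inner ℝ (a r') z : ℝ) + b r' ≤ (inner ℝ (a r) z : ℝ) + b r)) := by
  set S : ℝ := ∑ j, Real.exp (b j + (1/2) * ‖a j‖^2) with hS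
  have key : ∀ (z : EuclideanSpace ℝ (Fin D)) (r : Fin R),
      Real.exp (-‖z - a r‖^2 / 2) * π r =
        Real.exp ((inner ℝ (a r) z : ℝ) + b r) * (Real.exp (-‖z‖^2 / 2) / S) := by
    intro z r
    rw [hπ r]
    have hsq : ‖z - a r‖^2 = ‖z‖^2 - 2 * (inner ℝ z (a r) : ℝ) + ‖a r‖^2 :=
      norm_sub_sq_real z (a r)
    rw [hsq, real_inner_comm z (a r)]
    rw [← mul_div_assoc, ← mul_div_assoc, ← Real.exp_add, ← Real.exp_add]
    congr 2
    ring
  have hiff : ∀ (z : EuclideanSpace ℝ (Fin D)) (r r' : Fin R),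
      Real.exp (-‖z - a r‖^2 / 2) * π r ≥ Real.exp (-‖z - a r'‖^2 / 2) * π r' ↔
        (inner ℝ (a r) z : ℝ) + b r ≥ (inner ℝ (a r') z : ℝ) + b r' := by
    intro z r r'
    have hSpos : 0 < S := by
      have : 0 < Real.exp (b r + (1/2) * ‖a r‖^2) := Real.exp_pos _
      exact Finset.sum_pos' (fun j _ => (Real.exp_pos _).le) ⟨r, Finset.mem_univ r, this⟩
    have hc : 0 < Real.exp (-‖z‖^2 / 2) / S := by positivity
    rw [key z r, key z r', ge_iff_le, mul_le_mul_iff_of_pos_right hc, Real.exp_le_exp]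
  refine ⟨hiff, fun z r => ?_⟩
  constructor
  · intro h r'
    exact (hiff z r r').mp (h r')
  · intro h r'
    exact (hiff z r r').mpr (h r')
end

section
/- Let w ∈ ℝ^D, b ∈ ℝ, z ∈ ℝ^D and set u = ⟨w, z⟩ + b. Consider the MASO unit with R = 2 regions, slopes a_1 = w, a_2 = 0 and offsets b_1 = b, b_2 = 0, whose hard-VQ output is max(u, 0) (the ReLU). Its soft-VQ output, obtained by replacing the one-hot selection with the softmax posterior weights, equals (exp(u)/(exp(u)+1)) · u + (1/(exp(u)+1)) · 0 = sigmoid(u) · u, i.e. the MASO parameters inducing ReLU under HVQ induce the sigmoid gated linear unit under SVQ. -/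
/-- A two-region MASO unit with slopes `(w, 0)` and offsets `(b, 0)` has
hard-VQ output `max u 0` (ReLU of `u = ⟨w,z⟩ + b`) and soft-VQ output
`sigmoid(u) · u = (1/(1+exp(−u))) · u` (the sigmoid gated linear unit). -/
theorem stmt_10 {D : ℕ} (w : EuclideanSpace ℝ (Fin D)) (b : ℝ)
    (z : EuclideanSpace ℝ (Fin D)) (u : ℝ) (hu : u = (inner ℝ w z : ℝ) + b)
    (a : Fin 2 → EuclideanSpace ℝ (Fin D)) (ha0 : a 0 = w) (ha1 : a 1 = 0)
    (bv : Fin 2 → ℝ) (hb0 : bv 0 = b) (hb1 : bv 1 = 0) :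
    (max ((inner ℝ (a 0) z : ℝ) + bv 0) ((inner ℝ (a 1) z : ℝ) + bv 1) = max u 0) ∧
    (∑ r, (Real.exp ((inner ℝ (a r) z : ℝ) + bv r) /
            ∑ j, Real.exp ((inner ℝ (a j) z : ℝ) + bv j)) *
          ((inner ℝ (a r) z : ℝ) + bv r) =
      (1 / (1 + Real.exp (-u))) * u) := by
  have h0 : (inner ℝ (a 0) z : ℝ) + bv 0 = u := by rw [ha0, hb0, hu]
  have h1 : (inner ℝ (a 1) z : ℝ) + bv 1 = 0 := by
    rw [ha1, hb1, inner_zero_left]; ring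
  constructor
  · rw [h0, h1]
  · rw [Fin.sum_univ_two, Fin.sum_univ_two, h0, h1]
    have hpos : Real.exp u + Real.exp 0 > 0 := by positivity
    have hpos2 : 1 + Real.exp (-u) > 0 := by positivity
    rw [Real.exp_zero]
    field_simp
    rw [Real.exp_neg]
    have he : Real.exp u > 0 := Real.exp_pos u
    field_simp
    ring
end

section
/- Let w ∈ ℝ^D, b ∈ ℝ, β ∈ (0,1), set η = β/(1−β), and for z ∈ ℝ^D set u = ⟨w, z⟩ + b. Consider the MASO unit with R = 2 regions, slopes a_1 = w, a_2 = 0 and offsets b_1 = b, b_2 = 0 (which induces ReLU under HVQ). Its β-VQ output, ∑_r T_β(c)_r · (⟨a_r, z⟩ + b_r) with scores c = (u, 0), equals sigmoid(η · u) · u, the swish nonlinearity with gate parameter η. -/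
/-- The β-VQ output of the two-region MASO unit with slopes `(w,0)` and
offsets `(b,0)` (ReLU under HVQ) is the swish nonlinearity `sigmoid(η u) · u` with
`η = β/(1−β)` and `u = ⟨w,z⟩ + b`. -/
theorem stmt_12 {D : ℕ} (w : EuclideanSpace ℝ (Fin D)) (b : ℝ) (β : ℝ)
    (hβ : β ∈ Set.Ioo (0:ℝ) 1) (η : ℝ) (hη : η = β / (1 - β))
    (z : EuclideanSpace ℝ (Fin D)) (u : ℝ) (hu : u = (inner ℝ w z : ℝ) + b)
    (a : Fin 2 → EuclideanSpace ℝ (Fin D)) (ha0 : a 0 = w) (ha1 : a 1 = 0)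
    (bv : Fin 2 → ℝ) (hb0 : bv 0 = b) (hb1 : bv 1 = 0) :
    ∑ r, (Real.exp (β / (1 - β) * ((inner ℝ (a r) z : ℝ) + bv r)) /
            ∑ j, Real.exp (β / (1 - β) * ((inner ℝ (a j) z : ℝ) + bv j))) *
          ((inner ℝ (a r) z : ℝ) + bv r) =
      (1 / (1 + Real.exp (-(η * u)))) * u := by
  have h1 : Real.exp (η * u) > 0 := Real.exp_pos _
  have h2 : (1 : ℝ) + Real.exp (-(η * u)) > 0 := by positivity
  simp only [Fin.sum_univ_two, ha0, ha1, hb0, hb1, inner_zero_left, ← hη, ← hu,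
    add_zero, mul_zero, zero_add, Real.exp_zero]
  have key : Real.exp (η * u) * Real.exp (-(η * u)) = 1 := by
    rw [← Real.exp_add]; simp
  congr 1
  rw [div_eq_div_iff (by positivity) (by positivity)]
  nlinarith [key]
end

section
/- Let z ∈ ℝ^D, σ > 0, let a : Fin K → Fin R → ℝ^D satisfy ⟨a_{k,r}, a_{k',r'}⟩ = 0 for all k ≠ k' and all r, r', and let π : Fin K → Fin R → ℝ be positive with ∑_r π_{k,r} = 1 for each k. Define the per-unit score s_k(r) = ⟨a_{k,r}, z⟩ − ½‖a_{k,r}‖² + σ² · log π_{k,r}. Suppose for each k ∈ Fin K the index r*_k ∈ Fin R maximizes s_k over Fin R. Then the tuple t* = (r*_1, …, r*_K) maximizes the joint posterior of the factorial Gaussian mixture: for every t : Fin K → Fin R, exp(−‖z − ∑_k a_{k,t_k}‖²/(2σ²)) · ∏_k π_{k,t_k} ≤ exp(−‖z − ∑_k a_{k,t*_k}‖²/(2σ²)) · ∏_k π_{k,t*_k}. Hence under orthogonal filters the jointly optimal MAP estimate of the factorial model's vector quantization is obtained by independent per-unit maximization, with linear rather than exponential complexity in the number of units. -/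
/-- Under orthogonal filters, if for each unit `k` the index `rstar k`
maximizes the per-unit score `⟨a k r, z⟩ − ½‖a k r‖² + σ² log (π k r)`, then the tuple
`rstar` maximizes the (unnormalized) joint posterior of the factorial GMM; i.e. the
jointly optimal MAP estimate is obtained by independent per-unit maximization. -/
theorem stmt_18 {D K R : ℕ} (z : EuclideanSpace ℝ (Fin D)) (σ : ℝ) (hσ : 0 < σ)
    (a : Fin K → Fin R → EuclideanSpace ℝ (Fin D))
    (horth : ∀ (k k' : Fin K) (r r' : Fin R), k ≠ k' → (inner ℝ (a k r) (a k' r') : ℝ) = 0)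
    (π : Fin K → Fin R → ℝ) (hπpos : ∀ k r, 0 < π k r) (hπsum : ∀ k, ∑ r, π k r = 1)
    (rstar : Fin K → Fin R)
    (hstar : ∀ (k : Fin K) (r : Fin R),
        (inner ℝ (a k r) z : ℝ) - (1/2) * ‖a k r‖^2 + σ^2 * Real.log (π k r) ≤
          (inner ℝ (a k (rstar k)) z : ℝ) - (1/2) * ‖a k (rstar k)‖^2 +
            σ^2 * Real.log (π k (rstar k))) :
    ∀ t : Fin K → Fin R,
      Real.exp (-‖z - ∑ k, a k (t k)‖^2 / (2 * σ^2)) * ∏ k, π k (t k) ≤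
        Real.exp (-‖z - ∑ k, a k (rstar k)‖^2 / (2 * σ^2)) * ∏ k, π k (rstar k) := by
  intro t
  have hσ2 : (0:ℝ) < 2 * σ^2 := by positivity
  -- rewrite each side as a single exponential
  have hform : ∀ s : Fin K → Fin R,
      Real.exp (-‖z - ∑ k, a k (s k)‖^2 / (2 * σ^2)) * ∏ k, π k (s k)
        = Real.exp ((-‖z‖^2 + ∑ k, (2 * (inner ℝ (a k (s k)) z : ℝ) - ‖a k (s k)‖^2
            + 2 * σ^2 * Real.log (π k (s k)))) / (2 * σ^2)) := by
    intro s
    have hnorm : ‖z - ∑ k, a k (s k)‖^2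
        = ‖z‖^2 - 2 * ∑ k, (inner ℝ (a k (s k)) z : ℝ) + ∑ k, ‖a k (s k)‖^2 := by
      have h1 : ‖z - ∑ k, a k (s k)‖^2
          = ‖z‖^2 - 2 * (inner ℝ z (∑ k, a k (s k)) : ℝ) + ‖∑ k, a k (s k)‖^2 := by
        rw [@norm_sub_sq_real]
      have h2 : (inner ℝ z (∑ k, a k (s k)) : ℝ) = ∑ k, (inner ℝ (a k (s k)) z : ℝ) := by
        rw [inner_sum]
        exact Finset.sum_congr rfl fun k _ => (real_inner_comm z (a k (s k))).symm
      have h3 : ‖∑ k, a k (s k)‖^2 = ∑ k, ‖a k (s k)‖^2 := by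
        have := real_inner_self_eq_norm_sq (∑ k, a k (s k))
        rw [← this, inner_sum]
        rw [show (∑ k, ‖a k (s k)‖^2) = ∑ k, (inner ℝ (a k (s k)) (a k (s k)) : ℝ) from
          Finset.sum_congr rfl fun k _ => (real_inner_self_eq_norm_sq _).symm]
        refine Finset.sum_congr rfl fun k _ => ?_
        rw [sum_inner]
        rw [Finset.sum_eq_single k]
        · intro k' _ hk'; exact horth k' k (s k') (s k) hk'
        · intro h; exact absurd (Finset.mem_univ k) h
      rw [h1, h2, h3]
    have hprod : (∏ k, π k (s k)) = Real.exp (∑ k, Real.log (π k (s k))) := by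
      rw [Real.exp_sum]
      exact Finset.prod_congr rfl fun k _ => (Real.exp_log (hπpos k (s k))).symm
    rw [hprod, ← Real.exp_add]
    congr 1
    rw [hnorm]
    have hs : ∑ k, (2 * (inner ℝ (a k (s k)) z : ℝ) - ‖a k (s k)‖^2
        + 2 * σ^2 * Real.log (π k (s k)))
        = 2 * ∑ k, (inner ℝ (a k (s k)) z : ℝ) - ∑ k, ‖a k (s k)‖^2
          + 2 * σ^2 * ∑ k, Real.log (π k (s k)) := by
      rw [Finset.sum_add_distrib, Finset.sum_sub_distrib, Finset.mul_sum, Finset.mul_sum]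
    rw [hs]
    field_simp
    ring
  rw [hform t, hform rstar]
  apply Real.exp_le_exp.2
  apply div_le_div_of_nonneg_right ?_ hσ2.le
  apply add_le_add_right
  refine Finset.sum_le_sum fun k _ => ?_
  nlinarith [hstar k (t k)]
end
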